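/- Let F be a filter and P a prime filter of a residuated lattice with F ⊆ P. Then D_F(P) = ⋂{Q | Q is a prime filter with F ⊆ Q ⊆ P}. -/

import Mathlib

/-!
The inclusion `⊆` is immediate: if `a ⊔ b ∈ F` with `b ∉ P`, then every prime `Q` with
`F ⊆ Q ⊆ P` contains `a ⊔ b` but not `b`, hence contains `a`.

Conversely, if `(F : a) ⊆ P`, the set `C = {s | s ≤ a ⊔ c for some c ∉ P}` is closed under
joins (as `P` is prime) and disjoint from `F`. By the prime filter theorem some prime filter
`Q ⊇ F` misses `C`; since `C` contains `a` and the complement of `P`, we get `a ∉ Q ⊆ P`.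
The prime filter theorem is proved by Zorn's lemma: a maximal filter `M` missing `C` is prime,
because if `x, y ∉ M` then by maximality `q₁ ⊙ xᵐ ≤ s₁` and `q₂ ⊙ yⁿ ≤ s₂` with `qᵢ ∈ M`,
`sᵢ ∈ C`, while `x ⊔ y ∈ M` forces `xᵐ ⊔ yⁿ ∈ M`, so `s₁ ⊔ s₂ ∈ M ∩ C`.
-/

universe u

class ResiduatedLattice (A : Type u) extends Lattice A, BoundedOrder A where
  mul : A → A → A
  himp : A → A → A
  mul_comm : ∀ x y : A, mul x y = mul y x
  mul_assoc : ∀ x y z : A, mul (mul x y) z = mul x (mul y z)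
  mul_top : ∀ x : A, mul x ⊤ = x
  adjoint : ∀ x y z : A, mul x y ≤ z ↔ x ≤ himp y z

namespace RL

variable {A : Type u} [ResiduatedLattice A]

/-- A filter: a nonempty subset closed under the monoid operation `⊙` and closed
under joins with arbitrary elements. -/
def IsFilter (F : Set A) : Prop :=
  F.Nonempty ∧ (∀ x ∈ F, ∀ y ∈ F, ResiduatedLattice.mul x y ∈ F) ∧
    (∀ x ∈ F, ∀ y : A, x ⊔ y ∈ F)

/-- A prime filter: a proper filter such that `x ⊔ y ∈ P` implies `x ∈ P` or `y ∈ P`. -/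
def IsPrime (P : Set A) : Prop :=
  IsFilter P ∧ P ≠ Set.univ ∧ ∀ x y : A, x ⊔ y ∈ P → x ∈ P ∨ y ∈ P

/-- The filter generated by a subset `X`. -/
def Fgen (X : Set A) : Set A := ⋂₀ {G : Set A | IsFilter G ∧ X ⊆ G}

/-- An `X`-minimal prime filter: a minimal element of the set of prime filters containing `X`. -/
def MinPrimeOver (X : Set A) (P : Set A) : Prop :=
  IsPrime P ∧ X ⊆ P ∧ ∀ Q : Set A, IsPrime Q → X ⊆ Q → Q ⊆ P → Q = P

/-- A minimal prime filter. -/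
def MinPrime (P : Set A) : Prop :=
  IsPrime P ∧ ∀ Q : Set A, IsPrime Q → Q ⊆ P → Q = P

/-- The coannihilator of `X` belonging to `F`. -/
def coann (F : Set A) (X : Set A) : Set A := {a : A | ∀ x ∈ X, x ⊔ a ∈ F}

/-- `X^⊥ = {a | x ⊔ a = ⊤ for all x ∈ X}`. -/
def perp (X : Set A) : Set A := {a : A | ∀ x ∈ X, x ⊔ a = ⊤}

/-- `D_F(P) = {a | (F : a) ⊄ P}`. -/
def DF (F P : Set A) : Set A := {a : A | ¬ coann F {a} ⊆ P}

/-- A `∨`-closed subset: nonempty and closed under joins. -/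
def VClosed (C : Set A) : Prop := C.Nonempty ∧ ∀ x ∈ C, ∀ y ∈ C, x ⊔ y ∈ C

end RL

namespace RL

variable {A : Type u} [ResiduatedLattice A]

instance : CommMonoid A where
  mul := ResiduatedLattice.mul
  one := ⊤
  mul_assoc := ResiduatedLattice.mul_assoc
  mul_one := ResiduatedLattice.mul_top
  one_mul x := (ResiduatedLattice.mul_comm _ x).trans (ResiduatedLattice.mul_top x)
  mul_comm := ResiduatedLattice.mul_comm

theorem le_one (x : A) : x ≤ 1 := le_top

theorem mul_le_iff_le_himp {x y z : A} : x * y ≤ z ↔ x ≤ ResiduatedLattice.himp y z :=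
  ResiduatedLattice.adjoint x y z

instance : IsOrderedMonoid A where
  mul_le_mul_left _ _ h _ := mul_le_iff_le_himp.2 (h.trans (mul_le_iff_le_himp.1 le_rfl))

theorem sup_mul (x y z : A) : (x ⊔ y) * z = x * z ⊔ y * z :=
  le_antisymm
    (mul_le_iff_le_himp.2 <|
      sup_le (mul_le_iff_le_himp.1 le_sup_left) (mul_le_iff_le_himp.1 le_sup_right))
    (sup_le (mul_le_mul' le_sup_left le_rfl) (mul_le_mul' le_sup_right le_rfl))

theorem mul_sup (x y z : A) : x * (y ⊔ z) = x * y ⊔ x * z := by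
  simp only [mul_comm x, sup_mul]

theorem sup_pow_le (a b : A) : ∀ n : ℕ, (a ⊔ b) ^ n ≤ a ^ n ⊔ b
  | 0 => le_sup_left
  | n + 1 => calc
      (a ⊔ b) ^ (n + 1) ≤ (a ^ n ⊔ b) * (a ⊔ b) := mul_le_mul' (sup_pow_le a b n) le_rfl
      _ = a ^ n * a ⊔ a ^ n * b ⊔ b * (a ⊔ b) := by rw [sup_mul, mul_sup]
      _ ≤ a ^ (n + 1) ⊔ b :=
        sup_le (sup_le_sup (pow_succ a n).ge (mul_le_of_le_one_left' (le_one _)))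
          ((mul_le_of_le_one_right' (le_one _)).trans le_sup_right)

theorem mem_coann_singleton {F : Set A} {a b : A} : b ∈ coann F {a} ↔ a ⊔ b ∈ F := by
  simp [coann]

theorem mem_DF {F P : Set A} {a : A} : a ∈ DF F P ↔ ∃ b, a ⊔ b ∈ F ∧ b ∉ P := by
  simp [DF, Set.not_subset, mem_coann_singleton]

namespace IsFilter

variable {F : Set A}

theorem mem_of_le (hF : IsFilter F) {x y : A} (hx : x ∈ F) (hxy : x ≤ y) : y ∈ F :=
  sup_eq_right.2 hxy ▸ hF.2.2 x hx y

theorem one_mem (hF : IsFilter F) : (1 : A) ∈ F :=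
  hF.1.elim fun _ hx => hF.mem_of_le hx (le_one _)

theorem mul_mem (hF : IsFilter F) {x y : A} (hx : x ∈ F) (hy : y ∈ F) : x * y ∈ F :=
  hF.2.1 x hx y hy

theorem pow_mem (hF : IsFilter F) {x : A} (hx : x ∈ F) : ∀ n : ℕ, x ^ n ∈ F
  | 0 => hF.one_mem
  | n + 1 => hF.mul_mem (hF.pow_mem hx n) hx

theorem sup_pow_mem (hF : IsFilter F) {x y : A} (h : x ⊔ y ∈ F) (m n : ℕ) :
    x ^ m ⊔ y ^ n ∈ F := by
  have hm : x ^ m ⊔ y ∈ F := hF.mem_of_le (hF.pow_mem h m) (sup_pow_le x y m)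
  rw [sup_comm] at hm ⊢
  exact hF.mem_of_le (hF.pow_mem hm n) (sup_pow_le y (x ^ m) n)

end IsFilter

theorem isFilter_sUnion {c : Set (Set A)} (hc : ∀ G ∈ c, IsFilter G)
    (hchain : IsChain (· ⊆ ·) c) (hne : c.Nonempty) : IsFilter (⋃₀ c) := by
  refine ⟨?_, ?_, ?_⟩
  · obtain ⟨G, hG⟩ := hne
    exact (hc G hG).1.mono (Set.subset_sUnion_of_mem hG)
  · rintro x ⟨G₁, hG₁, hx⟩ y ⟨G₂, hG₂, hy⟩
    rcases hchain.total hG₁ hG₂ with h | h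
    · exact ⟨G₂, hG₂, (hc G₂ hG₂).mul_mem (h hx) hy⟩
    · exact ⟨G₁, hG₁, (hc G₁ hG₁).mul_mem hx (h hy)⟩
  · rintro x ⟨G, hG, hx⟩ y
    exact ⟨G, hG, (hc G hG).2.2 x hx y⟩

/-- The filter generated by `M ∪ {w}` when `M` is a filter. -/
def adjoin (M : Set A) (w : A) : Set A := {z | ∃ q ∈ M, ∃ n : ℕ, q * w ^ n ≤ z}

theorem isFilter_adjoin {M : Set A} (hM : IsFilter M) (w : A) : IsFilter (adjoin M w) := by
  refine ⟨⟨1, 1, hM.one_mem, 0, by simp⟩, ?_, ?_⟩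
  · rintro z₁ ⟨q₁, hq₁, n₁, h₁⟩ z₂ ⟨q₂, hq₂, n₂, h₂⟩
    refine ⟨q₁ * q₂, hM.mul_mem hq₁ hq₂, n₁ + n₂, ?_⟩
    rw [pow_add, mul_mul_mul_comm]
    exact mul_le_mul' h₁ h₂
  · rintro z ⟨q, hq, n, h⟩ y
    exact ⟨q, hq, n, h.trans le_sup_left⟩

theorem subset_adjoin (M : Set A) (w : A) : M ⊆ adjoin M w :=
  fun q hq => ⟨q, hq, 0, by simp⟩

theorem mem_adjoin_self {M : Set A} (hM : M.Nonempty) (w : A) : w ∈ adjoin M w :=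
  hM.elim fun q hq => ⟨q, hq, 1, by simpa using mul_le_of_le_one_left' (le_one q)⟩

variable {C : Set A}

theorem exists_mul_pow_le_of_not_mem {M : Set A}
    (hM : Maximal (fun G => IsFilter G ∧ Disjoint G C) M) {w : A} (hw : w ∉ M) :
    ∃ q ∈ M, ∃ n : ℕ, ∃ s ∈ C, q * w ^ n ≤ s := by
  by_contra! h
  have hdisj : Disjoint (adjoin M w) C :=
    Set.disjoint_left.2 fun z ⟨q, hq, n, hz⟩ hzC => h q hq n z hzC hz
  exact hw (hM.2 ⟨isFilter_adjoin hM.1.1 w, hdisj⟩ (subset_adjoin M w)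
    (mem_adjoin_self hM.1.1.1 w))

theorem isPrime_of_maximal (hC : VClosed C) {M : Set A}
    (hM : Maximal (fun G => IsFilter G ∧ Disjoint G C) M) : IsPrime M := by
  obtain ⟨hMF, hMC⟩ := hM.1
  refine ⟨hMF, fun hMuniv => ?_, fun x y hxy => ?_⟩
  · obtain ⟨s, hs⟩ := hC.1
    exact Set.disjoint_left.1 hMC (hMuniv ▸ Set.mem_univ s) hs
  · by_contra! hxy'
    obtain ⟨q₁, hq₁, m, s₁, hs₁, h₁⟩ := exists_mul_pow_le_of_not_mem hM hxy'.1
    obtain ⟨q₂, hq₂, n, s₂, hs₂, h₂⟩ := exists_mul_pow_le_of_not_mem hM hxy'.2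
    have hmem : q₁ * q₂ * (x ^ m ⊔ y ^ n) ∈ M :=
      hMF.mul_mem (hMF.mul_mem hq₁ hq₂) (hMF.sup_pow_mem hxy m n)
    have hle : q₁ * q₂ * (x ^ m ⊔ y ^ n) ≤ s₁ ⊔ s₂ := by
      rw [mul_sup]
      exact sup_le_sup
        ((mul_le_mul' (mul_le_of_le_one_right' (le_one q₂)) le_rfl).trans h₁)
        ((mul_le_mul' (mul_le_of_le_one_left' (le_one q₁)) le_rfl).trans h₂)
    exact Set.disjoint_left.1 hMC (hMF.mem_of_le hmem hle) (hC.2 s₁ hs₁ s₂ hs₂)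

theorem exists_maximal_filter {F : Set A} (hF : IsFilter F) (hFC : Disjoint F C) :
    ∃ M, F ⊆ M ∧ Maximal (fun G => IsFilter G ∧ Disjoint G C) M := by
  refine zorn_subset_nonempty {G | IsFilter G ∧ Disjoint G C} ?_ F ⟨hF, hFC⟩
  intro c hc hchain hne
  exact ⟨⋃₀ c, ⟨isFilter_sUnion (fun G hG => (hc hG).1) hchain hne,
    Set.disjoint_sUnion_left.2 fun G hG => (hc hG).2⟩, fun _ => Set.subset_sUnion_of_mem⟩

theorem exists_isPrime_of_disjoint {F : Set A} (hF : IsFilter F) (hC : VClosed C)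
    (hFC : Disjoint F C) : ∃ Q, IsPrime Q ∧ F ⊆ Q ∧ Disjoint Q C :=
  let ⟨M, hFM, hM⟩ := exists_maximal_filter hF hFC
  ⟨M, isPrime_of_maximal hC hM, hFM, hM.1.2⟩

theorem mem_of_mem_DF {F P Q : Set A} (hQ : IsPrime Q) (hFQ : F ⊆ Q) (hQP : Q ⊆ P) {a : A}
    (ha : a ∈ DF F P) : a ∈ Q := by
  obtain ⟨b, hab, hbP⟩ := mem_DF.1 ha
  exact (hQ.2.2 a b (hFQ hab)).resolve_right fun hbQ => hbP (hQP hbQ)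

theorem exists_isPrime_of_not_mem_DF {F P : Set A} (hF : IsFilter F) (hP : IsPrime P) {a : A}
    (ha : a ∉ DF F P) : ∃ Q, IsPrime Q ∧ F ⊆ Q ∧ Q ⊆ P ∧ a ∉ Q := by
  set C : Set A := {s | ∃ c ∉ P, s ≤ a ⊔ c}
  obtain ⟨c₀, hc₀⟩ := (Set.ne_univ_iff_exists_notMem P).1 hP.2.1
  have hC : VClosed C := by
    refine ⟨⟨c₀, c₀, hc₀, le_sup_right⟩, ?_⟩
    rintro s ⟨c, hc, hs⟩ t ⟨d, hd, ht⟩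
    refine ⟨c ⊔ d, fun hcd => (hP.2.2 c d hcd).elim hc hd, ?_⟩
    calc s ⊔ t ≤ (a ⊔ c) ⊔ (a ⊔ d) := sup_le_sup hs ht
      _ = a ⊔ (c ⊔ d) := sup_sup_distrib_left a c d |>.symm
  have hFC : Disjoint F C := by
    refine Set.disjoint_left.2 fun f hf ⟨c, hcP, hfc⟩ => hcP ?_
    by_contra hc
    exact ha (mem_DF.2 ⟨c, hF.mem_of_le hf hfc, hc⟩)
  obtain ⟨Q, hQ, hFQ, hQC⟩ := exists_isPrime_of_disjoint hF hC hFC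
  refine ⟨Q, hQ, hFQ, fun z hz => ?_, fun haQ => ?_⟩
  · by_contra hzP
    exact Set.disjoint_left.1 hQC hz ⟨z, hzP, le_sup_right⟩
  · exact Set.disjoint_left.1 hQC haQ ⟨c₀, hc₀, le_sup_left⟩

end RL

theorem DF_eq_sInter_general {A : Type u} [ResiduatedLattice A] (F P : Set A)
    (hF : RL.IsFilter F) (hP : RL.IsPrime P) :
    RL.DF F P = ⋂₀ {Q : Set A | RL.IsPrime Q ∧ F ⊆ Q ∧ Q ⊆ P} := by
  ext a
  refine ⟨fun ha Q ⟨hQ, hFQ, hQP⟩ => RL.mem_of_mem_DF hQ hFQ hQP ha, fun ha => ?_⟩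
  by_contra hna
  obtain ⟨Q, hQ, hFQ, hQP, haQ⟩ := RL.exists_isPrime_of_not_mem_DF hF hP hna
  exact haQ (ha Q ⟨hQ, hFQ, hQP⟩)

theorem DF_eq_sInter {A : Type u} [ResiduatedLattice A] (F P : Set A)
    (hF : RL.IsFilter F) (hP : RL.IsPrime P) (hFP : F ⊆ P) :
    RL.DF F P = ⋂₀ {Q : Set A | RL.IsPrime Q ∧ F ⊆ Q ∧ Q ⊆ P} :=
  DF_eq_sInter_general F P hF hP
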